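/- Let λ ≠ 0, B ∈ ℝ, κ : I → ℝ positive and differentiable with λ∫_{s₀}^s κ < B, E(s) = e^{λ∫_{s₀}^s κ - B}, θ(s) = arctan(√(1-E²)/λ) - (1/λ)arctanh(√(1-E²)), and t(s) = (√(1 - E²/(1+λ²)) cos θ, √(1 - E²/(1+λ²)) sin θ, E/√(1+λ²)). Then |t'(s)| = κ(s), i.e., the curvature of the curve α(s) = ∫ t is κ. -/

import Mathlib

/-- Inverse hyperbolic tangent. -/
noncomputable def artanh (x : ℝ) : ℝ := Real.log ((1 + x) / (1 - x)) / 2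

/-- A point of `ℝ³` as Euclidean space. -/
noncomputable def V3 (x y z : ℝ) : EuclideanSpace ℝ (Fin 3) :=
  (WithLp.equiv 2 (Fin 3 → ℝ)).symm ![x, y, z]

/-!
The tangent factors as `T = t̂ ∘ E`, where `t̂ = whirlTangent lam` is the same formula read as a
function of `e = E s`, and `E' = λ κ E`. In cylindrical coordinates `(r, φ, z)` the speed of `t̂`
is `√(r'² + r² φ'² + z'²)`, which for the given `r`, `φ`, `z` collapses to `1 / (|λ| e)`.
The chain rule then gives `‖T'‖ = |λ κ E| / (|λ| E) = κ`.
-/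

open Real hiding artanh

lemma norm_V3 (x y z : ℝ) : ‖V3 x y z‖ = √(x ^ 2 + y ^ 2 + z ^ 2) := by
  simp [V3, EuclideanSpace.norm_eq, Fin.sum_univ_three, sq_abs]

lemma HasDerivAt.V3 {x y z : ℝ → ℝ} {x' y' z' t : ℝ} (hx : HasDerivAt x x' t)
    (hy : HasDerivAt y y' t) (hz : HasDerivAt z z' t) :
    HasDerivAt (fun t => V3 (x t) (y t) (z t)) (V3 x' y' z') t := by
  have hpi : HasDerivAt (fun t => ![x t, y t, z t]) ![x', y', z'] t := by
    rw [hasDerivAt_pi]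
    intro i
    fin_cases i <;> simpa
  exact (EuclideanSpace.equiv (Fin 3) ℝ).symm.toContinuousLinearMap.hasFDerivAt.comp_hasDerivAt
    t hpi

lemma exists_hasDerivAt_cylindrical {r φ z : ℝ → ℝ} {r' φ' z' t : ℝ} (hr : HasDerivAt r r' t)
    (hφ : HasDerivAt φ φ' t) (hz : HasDerivAt z z' t) :
    ∃ v, HasDerivAt (fun t => V3 (r t * cos (φ t)) (r t * sin (φ t)) (z t)) v t ∧
      ‖v‖ = √(r' ^ 2 + (r t * φ') ^ 2 + z' ^ 2) := by
  refine ⟨_, (hr.mul hφ.cos).V3 (hr.mul hφ.sin) hz, ?_⟩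
  rw [norm_V3]
  congr 1
  linear_combination (r' ^ 2 + (r t * φ') ^ 2) * sin_sq_add_cos_sq (φ t)

lemma hasDerivAt_artanh {x : ℝ} (h₁ : -1 < x) (h₂ : x < 1) :
    HasDerivAt artanh (1 / (1 - x ^ 2)) x := by
  have hp : 0 < 1 + x := by linarith
  have hm : 0 < 1 - x := by linarith
  have hq : HasDerivAt (fun y => (1 + y) / (1 - y)) (2 / (1 - x) ^ 2) x :=
    (((hasDerivAt_id x).const_add 1).div ((hasDerivAt_id x).const_sub 1) hm.ne').congr_deriv
      (by simp only [id]; ring)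
  have hlog := ((hasDerivAt_log (div_pos hp hm).ne').comp x hq).div_const 2
  refine (hlog : HasDerivAt artanh _ x).congr_deriv ?_
  have : 1 - x ^ 2 ≠ 0 := by nlinarith
  field_simp
  ring

lemma hasDerivAt_arctan_div_sub_artanh_div {lam u : ℝ} (hlam : lam ≠ 0) (h₁ : -1 < u) (h₂ : u < 1) :
    HasDerivAt (fun u => arctan (u / lam) - artanh u / lam)
      (-(u ^ 2 * (1 + lam ^ 2)) / (lam * (1 - u ^ 2) * (lam ^ 2 + u ^ 2))) u := by
  have hd := ((hasDerivAt_id u).div_const lam).arctan.sub ((hasDerivAt_artanh h₁ h₂).div_const lam)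
  refine hd.congr_deriv ?_
  have : 1 - u ^ 2 ≠ 0 := by nlinarith
  have : lam ^ 2 + u ^ 2 ≠ 0 := by positivity
  simp only [id]
  field_simp
  ring

noncomputable def whirlAngle (lam e : ℝ) : ℝ :=
  arctan (√(1 - e ^ 2) / lam) - artanh (√(1 - e ^ 2)) / lam

lemma hasDerivAt_whirlAngle {lam e : ℝ} (hlam : lam ≠ 0) (h₀ : 0 < e) (h₁ : e < 1) :
    HasDerivAt (whirlAngle lam)
      (√(1 - e ^ 2) * (1 + lam ^ 2) / (lam * e * (1 + lam ^ 2 - e ^ 2))) e := by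
  have hq : 0 < 1 - e ^ 2 := by nlinarith
  have hu : HasDerivAt (fun e => √(1 - e ^ 2)) (-(2 * e) / (2 * √(1 - e ^ 2))) e := by
    refine (((hasDerivAt_id e).pow 2).const_sub 1).sqrt hq.ne' |>.congr_deriv ?_
    simp
  have hu₀ : 0 < √(1 - e ^ 2) := sqrt_pos.mpr hq
  have hu₁ : √(1 - e ^ 2) < 1 := (sqrt_lt' one_pos).mpr (by nlinarith)
  refine ((hasDerivAt_arctan_div_sub_artanh_div hlam (by linarith) hu₁).comp e hu).congr_deriv ?_
  rw [sq_sqrt hq.le]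
  have : 1 + lam ^ 2 - e ^ 2 ≠ 0 := by nlinarith [sq_nonneg lam]
  have : lam ^ 2 + (1 - e ^ 2) ≠ 0 := by nlinarith [sq_nonneg lam]
  field_simp
  rw [sq_sqrt hq.le]
  ring

noncomputable def whirlTangent (lam e : ℝ) : EuclideanSpace ℝ (Fin 3) :=
  V3 (√(1 - e ^ 2 / (1 + lam ^ 2)) * cos (whirlAngle lam e))
    (√(1 - e ^ 2 / (1 + lam ^ 2)) * sin (whirlAngle lam e)) (e / √(1 + lam ^ 2))

lemma exists_hasDerivAt_whirlTangent {lam e : ℝ} (hlam : lam ≠ 0) (h₀ : 0 < e) (h₁ : e < 1) :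
    ∃ v, HasDerivAt (whirlTangent lam) v e ∧ ‖v‖ = 1 / (|lam| * e) := by
  have hP : 0 < 1 + lam ^ 2 := by positivity
  have hPe : 0 < 1 + lam ^ 2 - e ^ 2 := by nlinarith [sq_nonneg lam]
  have hu : 0 < 1 - e ^ 2 := by nlinarith
  have hr : 0 < 1 - e ^ 2 / (1 + lam ^ 2) := by rw [sub_pos, div_lt_one hP]; linarith
  have hr' : HasDerivAt (fun e => √(1 - e ^ 2 / (1 + lam ^ 2)))
      (-(2 * e / (1 + lam ^ 2)) / (2 * √(1 - e ^ 2 / (1 + lam ^ 2)))) e := by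
    refine ((((hasDerivAt_id e).pow 2).div_const _).const_sub 1).sqrt hr.ne' |>.congr_deriv ?_
    simp
  obtain ⟨v, hv, hnorm⟩ := exists_hasDerivAt_cylindrical hr' (hasDerivAt_whirlAngle hlam h₀ h₁)
    ((hasDerivAt_id e).div_const √(1 + lam ^ 2))
  have hspeed : (-(2 * e / (1 + lam ^ 2)) / (2 * √(1 - e ^ 2 / (1 + lam ^ 2)))) ^ 2 +
      (√(1 - e ^ 2 / (1 + lam ^ 2)) *
        (√(1 - e ^ 2) * (1 + lam ^ 2) / (lam * e * (1 + lam ^ 2 - e ^ 2)))) ^ 2 +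
      (1 / √(1 + lam ^ 2)) ^ 2 = (1 / (lam * e)) ^ 2 := by
    simp only [div_pow, mul_pow, neg_sq, sq_sqrt hP.le, sq_sqrt hu.le, sq_sqrt hr.le]
    field_simp
    ring
  refine ⟨v, hv, ?_⟩
  rw [hnorm, hspeed, sqrt_sq_eq_abs, abs_div, abs_one, abs_mul, abs_of_pos h₀]

lemma hasDerivAt_integral_of_continuousOn {I : Set ℝ} {f : ℝ → ℝ} {a b : ℝ} (hI : IsOpen I)
    (hI' : I.OrdConnected) (ha : a ∈ I) (hb : b ∈ I) (hf : ContinuousOn f I) :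
    HasDerivAt (fun x => ∫ u in a..x, f u) (f b) b :=
  intervalIntegral.integral_hasDerivAt_right ((hf.mono (hI'.uIcc_subset ha hb)).intervalIntegrable)
    (hf.stronglyMeasurableAtFilter hI b hb) (hf.continuousAt (hI.mem_nhds hb))

/-- the derivative of the tangent vector
`t(s) = (√(1-E²/(1+λ²)) cos θ, √(1-E²/(1+λ²)) sin θ, E/√(1+λ²))`, with
`E = exp(λ∫κ − B)` and `θ = arctan(√(1-E²)/λ) − (1/λ)artanh(√(1-E²))`, 
has norm `κ(s)`: the curvature of the curve `α = ∫ t` is `κ`. -/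
theorem whirl_tangent_curvature
    (I : Set ℝ) (s₀ : ℝ) (hs₀ : s₀ ∈ I) (hI : IsOpen I) (hconn : Convex ℝ I)
    (κ : ℝ → ℝ) (lam B : ℝ) (hlam : lam ≠ 0)
    (hκd : ∀ s ∈ I, DifferentiableAt ℝ κ s)
    (hκ : ∀ s ∈ I, 0 < κ s)
    (hB : ∀ s ∈ I, lam * ∫ u in s₀..s, κ u < B)
    (E θ : ℝ → ℝ)
    (hE : ∀ s, E s = Real.exp (lam * (∫ u in s₀..s, κ u) - B))
    (hθ : ∀ s, θ s = Real.arctan (Real.sqrt (1 - E s ^ 2) / lam) -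
        artanh (Real.sqrt (1 - E s ^ 2)) / lam)
    (T : ℝ → EuclideanSpace ℝ (Fin 3))
    (hT : ∀ s, T s = V3
      (Real.sqrt (1 - E s ^ 2 / (1 + lam ^ 2)) * Real.cos (θ s))
      (Real.sqrt (1 - E s ^ 2 / (1 + lam ^ 2)) * Real.sin (θ s))
      (E s / Real.sqrt (1 + lam ^ 2))) :
    ∀ s ∈ I, ∃ v : EuclideanSpace ℝ (Fin 3), HasDerivAt T v s ∧ ‖v‖ = κ s := by
  intro s hs
  have hκI : ContinuousOn κ I := fun t ht => (hκd t ht).continuousAt.continuousWithinAt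
  have hE' : HasDerivAt E (lam * κ s * E s) s := by
    have hF := hasDerivAt_integral_of_continuousOn hI hconn.ordConnected hs₀ hs hκI
    rw [hE s, funext hE]
    exact ((hF.const_mul lam).sub_const B).exp.congr_deriv (by ring)
  have hE₀ : 0 < E s := hE s ▸ exp_pos _
  have hE₁ : E s < 1 := hE s ▸ exp_lt_one_iff.mpr (by linarith [hB s hs])
  obtain ⟨v, hv, hnorm⟩ := exists_hasDerivAt_whirlTangent hlam hE₀ hE₁
  have hTE : T = whirlTangent lam ∘ E := funext fun t => by rw [hT, hθ]; rfl
  refine ⟨(lam * κ s * E s) • v, hTE ▸ hv.scomp s hE', ?_⟩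
  rw [norm_smul, hnorm, norm_mul, norm_mul, norm_eq_abs, norm_of_nonneg (hκ s hs).le,
    norm_of_nonneg hE₀.le]
  field_simp
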